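/- arXiv:1705.09424 — 4 statements merged into one kernel-verified Lean document; each statement's English description precedes it below -/
import Mathlib

section
/- Let G be a bipartite graph with n boundary vertices (all black) admitting an almost perfect matching, and let k = (number of interior white vertices) − (number of interior black vertices) be the excedance of G. Then for any perfect orientation of G arising from an almost perfect matching π (edges of π oriented white→black, all other edges black→white), the number of boundary vertices that are sinks of the orientation equals k, and the number of boundary vertices that are sources equals n − k. -/
/-!
Count the matched edges twice. Every matched edge starts at a white vertex, and every white
vertex is interior, hence covered exactly once: `#π = #white`. Every matched edge ends at a
black vertex; interior black vertices are covered exactly once and boundary ones at most once,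
so `#π = #interior black + #sinks`. Hence `#sinks = k`. A boundary vertex has a single edge,
so it is a source exactly when it is not a sink, which gives `n - k` sources.
-/

open scoped Classical

open Finset

theorem Finset.card_eq_of_forall_card_fiber_eq_one {α β : Type*} [DecidableEq β]
    {s : Finset α} {t : Finset β} {f : α → β} (hst : ∀ a ∈ s, f a ∈ t)
    (hfib : ∀ b ∈ t, #{a ∈ s | f a = b} = 1) : #s = #t := by
  rw [card_eq_sum_card_fiberwise hst, sum_congr rfl hfib, sum_const, smul_eq_mul, mul_one]

section Matching

variable {V : Type*} {n : ℕ} {white : V → Prop} {bnd : Fin n ↪ V}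
  {E π : Finset (V × V)}

lemma filter_incident_eq_filter_fst (hE : ∀ e ∈ E, white e.1 ∧ ¬ white e.2) (hπE : π ⊆ E)
    {v : V} (hv : white v) : π.filter (fun e => e.1 = v ∨ e.2 = v) = π.filter (·.1 = v) :=
  filter_congr fun e he => by
    have : e.2 ≠ v := fun h => (hE e (hπE he)).2 (h ▸ hv)
    tauto

lemma filter_incident_eq_filter_snd (hE : ∀ e ∈ E, white e.1 ∧ ¬ white e.2) (hπE : π ⊆ E)
    {v : V} (hv : ¬ white v) : π.filter (fun e => e.1 = v ∨ e.2 = v) = π.filter (·.2 = v) :=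
  filter_congr fun e he => by
    have : e.1 ≠ v := fun h => hv (h ▸ (hE e (hπE he)).1)
    tauto

lemma card_matching_eq_card_white [Fintype V] (hb : ∀ i, ¬ white (bnd i))
    (hE : ∀ e ∈ E, white e.1 ∧ ¬ white e.2) (hπE : π ⊆ E)
    (hint : ∀ v, (¬ ∃ i, v = bnd i) → (π.filter (fun e => e.1 = v ∨ e.2 = v)).card = 1) :
    #π = #{v | white v ∧ ¬ ∃ i, v = bnd i} := by
  have interior_of_white : ∀ v, white v → ¬ ∃ i, v = bnd i := by
    rintro v hv ⟨i, rfl⟩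
    exact hb i hv
  refine card_eq_of_forall_card_fiber_eq_one (f := Prod.fst) (fun e he => ?_) (fun v hv => ?_)
  · have hw := (hE e (hπE he)).1
    exact mem_filter.mpr ⟨mem_univ _, hw, interior_of_white _ hw⟩
  · obtain ⟨hw, hvi⟩ := (mem_filter.mp hv).2
    rw [← filter_incident_eq_filter_fst hE hπE hw]
    exact hint v hvi

lemma card_matching_eq_card_sinks_add_card_interior_black [Fintype V]
    (hE : ∀ e ∈ E, white e.1 ∧ ¬ white e.2) (hπE : π ⊆ E)
    (hint : ∀ v, (¬ ∃ i, v = bnd i) → (π.filter (fun e => e.1 = v ∨ e.2 = v)).card = 1)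
    (hbd : ∀ v, (∃ i, v = bnd i) → (π.filter (fun e => e.1 = v ∨ e.2 = v)).card ≤ 1) :
    #π = #{i : Fin n | ∃ e ∈ π, e.2 = bnd i} + #{v | ¬ white v ∧ ¬ ∃ i, v = bnd i} := by
  set sinks : Finset (Fin n) := {i | ∃ e ∈ π, e.2 = bnd i}
  set interiorBlack : Finset V := {v | ¬ white v ∧ ¬ ∃ i, v = bnd i}
  have hdisj : Disjoint (sinks.map bnd) interiorBlack := by
    simp only [disjoint_left, mem_map, mem_filter, mem_univ, true_and, interiorBlack]
    rintro _ ⟨i, -, rfl⟩ ⟨-, hi⟩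
    exact hi ⟨i, rfl⟩
  rw [← card_map bnd, ← card_union_of_disjoint hdisj]
  refine card_eq_of_forall_card_fiber_eq_one (f := Prod.snd) (fun e he => ?_) (fun v hv => ?_)
  · by_cases hbdry : ∃ i, e.2 = bnd i
    · obtain ⟨i, hi⟩ := hbdry
      exact mem_union_left _ (mem_map.mpr ⟨i, mem_filter.mpr ⟨mem_univ _, e, he, hi⟩, hi.symm⟩)
    · exact mem_union_right _ (mem_filter.mpr ⟨mem_univ _, (hE e (hπE he)).2, hbdry⟩)
  · rcases mem_union.mp hv with hv | hv
    · obtain ⟨i, hi, rfl⟩ := mem_map.mp hv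
      obtain ⟨e, he, hei⟩ := (mem_filter.mp hi).2
      have hle := hbd (bnd i) ⟨i, rfl⟩
      rw [filter_incident_eq_filter_snd hE hπE (hei ▸ (hE e (hπE he)).2)] at hle
      have hpos : 0 < #{e ∈ π | e.2 = bnd i} := card_pos.mpr ⟨e, mem_filter.mpr ⟨he, hei⟩⟩
      omega
    · obtain ⟨hv, hvi⟩ := (mem_filter.mp hv).2
      rw [← filter_incident_eq_filter_snd hE hπE hv]
      exact hint v hvi

lemma exists_unmatched_edge_iff_not_exists_matched (hπE : π ⊆ E) {v : V}
    (hv : (E.filter (fun e => e.2 = v)).card = 1) :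
    (∃ e ∈ E, e.2 = v ∧ e ∉ π) ↔ ¬ ∃ e ∈ π, e.2 = v := by
  obtain ⟨e₀, he₀⟩ := card_eq_one.mp hv
  have hunique : ∀ e ∈ E, e.2 = v ↔ e = e₀ := fun e he => by
    simpa [he] using congrArg (e ∈ ·) he₀
  constructor
  · rintro ⟨e, heE, he, heπ⟩ ⟨f, hfπ, hf⟩
    rw [(hunique e heE).mp he, ← (hunique f (hπE hfπ)).mp hf] at heπ
    exact heπ hfπ
  · intro hunmatched
    have he₀E : e₀ ∈ E := (mem_filter.mp (he₀ ▸ mem_singleton_self e₀)).1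
    have he₀v : e₀.2 = v := (hunique e₀ he₀E).mpr rfl
    exact ⟨e₀, he₀E, he₀v, fun h => hunmatched ⟨e₀, h, he₀v⟩⟩

end Matching

theorem sinks_and_sources_of_perfect_orientation
    {V : Type*} [Fintype V] {n : ℕ}
    (white : V → Prop)
    (bnd : Fin n ↪ V)                 -- the boundary vertices
    (hb : ∀ i, ¬ white (bnd i))       -- boundary vertices are black
    (E : Finset (V × V))
    (hE : ∀ e ∈ E, white e.1 ∧ ¬ white e.2)
    -- each boundary vertex is incident to exactly one (boundary) edge
    (hbdedge : ∀ i : Fin n, (E.filter (fun e => e.2 = bnd i)).card = 1)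
    (π : Finset (V × V)) (hπE : π ⊆ E)
    (hint : ∀ v, (¬ ∃ i, v = bnd i) →
      (π.filter (fun e => e.1 = v ∨ e.2 = v)).card = 1)
    (hbd : ∀ v, (∃ i, v = bnd i) →
      (π.filter (fun e => e.1 = v ∨ e.2 = v)).card ≤ 1)
    (k : ℕ)
    -- `k` is the excedance: #interior white − #interior black
    (hk : (Finset.univ.filter (fun v => white v ∧ ¬ ∃ i, v = bnd i)).card
        = k + (Finset.univ.filter (fun v => ¬ white v ∧ ¬ ∃ i, v = bnd i)).card) :
    -- sinks: boundary vertices whose boundary edge is matched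
    (Finset.univ.filter (fun i : Fin n => ∃ e ∈ π, e.2 = bnd i)).card = k ∧
    -- sources: boundary vertices whose boundary edge is unmatched
    (Finset.univ.filter
        (fun i : Fin n => ∃ e ∈ E, e.2 = bnd i ∧ e ∉ π)).card = n - k := by
  have hwhite := card_matching_eq_card_white hb hE hπE hint
  have hblack := card_matching_eq_card_sinks_add_card_interior_black hE hπE hint hbd
  have hsinks : #{i : Fin n | ∃ e ∈ π, e.2 = bnd i} = k := by omega
  refine ⟨hsinks, ?_⟩
  have hsources := card_filter_add_card_filter_not
    (s := (univ : Finset (Fin n))) (p := fun i => ∃ e ∈ π, e.2 = bnd i)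
  rw [filter_congr fun i _ => exists_unmatched_edge_iff_not_exists_matched hπE (hbdedge i)]
  simp only [card_univ, Fintype.card_fin] at hsources
  omega
end

section
/- Let G be a bipartite graph with all boundary vertices black, and let W be an r-weblike subgraph of G, i.e., a spanning subgraph with each edge e labeled by a multiplicity m(e) ∈ {1,…,r} such that the multiplicities of edges around each interior vertex sum to r. Let ℓ be a consistent labeling of W: an assignment of a subset S(e) ⊆ [r] with |S(e)| = m(e) to every edge e of W, such that around each interior vertex the sets S(e) of incident edges are pairwise disjoint (hence their union is [r]). Then every color i ∈ [r] appears in the boundary edge labels with total multiplicity exactly k, where k is the excedance of G; i.e., the multiset union S(b_1) ∪ ⋯ ∪ S(b_n) over boundary edges equals {1^k, 2^k, …, r^k}. -/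
/-!
Fix a color `i`. Around every interior vertex the labels partition `[r]`, so exactly one
incident edge carries `i`: the `i`-colored edges form a matching covering every interior
vertex exactly once. Boundary vertices are black, so every white vertex is interior and each
`i`-colored edge has exactly one white end; hence there are `#(interior white)` such edges.
Those whose black end is interior are counted by `#(interior black)`, and the remaining `k`
end on the boundary.
-/

open scoped Classical

open Finset

theorem Finset.existsUnique_mem_of_pairwiseDisjoint_of_sum_card {ι α : Type*} [Fintype α]
    {F : Finset ι} {S : ι → Finset α} (hdisj : (F : Set ι).PairwiseDisjoint S)
    (hsum : ∑ e ∈ F, #(S e) = Fintype.card α) (a : α) : ∃! e, e ∈ F ∧ a ∈ S e := by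
  have hcover : F.biUnion S = univ := eq_univ_of_card _ (by rw [card_biUnion hdisj, hsum])
  obtain ⟨e, he, hae⟩ := mem_biUnion.mp (hcover ▸ mem_univ a)
  refine ⟨e, ⟨he, hae⟩, fun e' ⟨he', hae'⟩ => ?_⟩
  by_contra hne
  exact disjoint_left.mp (hdisj he' he hne) hae' hae

theorem Finset.card_eq_card_filter_of_existsUnique {α β : Type*} [Fintype β] {s : Finset α}
    {f : α → β} {p : β → Prop} [DecidablePred p] (hmaps : ∀ a ∈ s, p (f a))
    (huniq : ∀ b, p b → ∃! a, a ∈ s ∧ f a = b) : #s = #(univ.filter p) := by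
  refine card_bij (fun a _ => f a) (fun a ha => by simpa using hmaps a ha) ?_ ?_
  · intro a₁ ha₁ a₂ ha₂ hf
    exact (huniq _ (hmaps a₁ ha₁)).unique ⟨ha₁, rfl⟩ ⟨ha₂, hf.symm⟩
  · intro b hb
    obtain ⟨a, ⟨ha, hfa⟩, -⟩ := huniq b (by simpa using hb)
    exact ⟨a, ha, hfa⟩

section InteriorMatching

variable {V : Type*} [Fintype V] {n : ℕ} {white : V → Prop} {bnd : Fin n → V}
  {T : Finset (V × V)}

theorem card_eq_card_interior_white (hT : ∀ e ∈ T, white e.1 ∧ ¬ white e.2)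
    (hb : ∀ j, ¬ white (bnd j))
    (hmatch : ∀ v, (¬ ∃ j, v = bnd j) → ∃! e, e ∈ T ∧ (e.1 = v ∨ e.2 = v)) :
    #T = #(univ.filter (fun v => white v ∧ ¬ ∃ j, v = bnd j)) := by
  refine card_eq_card_filter_of_existsUnique (f := Prod.fst) ?_ ?_
  · rintro e he
    exact ⟨(hT e he).1, fun ⟨j, hj⟩ => hb j (hj ▸ (hT e he).1)⟩
  · rintro v ⟨hv, hint⟩
    refine (existsUnique_congr fun e => and_congr_right fun he => ?_).mp (hmatch v hint)
    exact or_iff_left fun h => (hT e he).2 (h ▸ hv)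

theorem card_filter_interior_eq_card_interior_black (hT : ∀ e ∈ T, white e.1 ∧ ¬ white e.2)
    (hmatch : ∀ v, (¬ ∃ j, v = bnd j) → ∃! e, e ∈ T ∧ (e.1 = v ∨ e.2 = v)) :
    #(T.filter (fun e => ¬ ∃ j, e.2 = bnd j)) =
      #(univ.filter (fun v => ¬ white v ∧ ¬ ∃ j, v = bnd j)) := by
  refine card_eq_card_filter_of_existsUnique (f := Prod.snd) ?_ ?_
  · intro e he
    rw [mem_filter] at he
    exact ⟨(hT e he.1).2, he.2⟩
  · rintro v ⟨hv, hint⟩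
    refine (existsUnique_congr fun e => ?_).mp (hmatch v hint)
    rw [mem_filter]
    constructor
    · rintro ⟨he, h | h⟩
      · exact absurd (h ▸ (hT e he).1) hv
      · exact ⟨⟨he, h ▸ hint⟩, h⟩
    · rintro ⟨⟨he, -⟩, h⟩
      exact ⟨he, Or.inr h⟩

theorem card_boundary_add_card_interior_black (hT : ∀ e ∈ T, white e.1 ∧ ¬ white e.2)
    (hb : ∀ j, ¬ white (bnd j))
    (hmatch : ∀ v, (¬ ∃ j, v = bnd j) → ∃! e, e ∈ T ∧ (e.1 = v ∨ e.2 = v)) :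
    #(T.filter (fun e => ∃ j, e.2 = bnd j)) +
        #(univ.filter (fun v => ¬ white v ∧ ¬ ∃ j, v = bnd j)) =
      #(univ.filter (fun v => white v ∧ ¬ ∃ j, v = bnd j)) := by
  rw [← card_filter_interior_eq_card_interior_black hT hmatch,
    card_filter_add_card_filter_not, card_eq_card_interior_white hT hb hmatch]

end InteriorMatching

theorem consistent_labeling_boundary_multiset_general
    {V : Type*} [Fintype V] {n r : ℕ}
    (white : V → Prop)
    (bnd : Fin n ↪ V) (hb : ∀ i, ¬ white (bnd i))
    (E : Finset (V × V)) (hE : ∀ e ∈ E, white e.1 ∧ ¬ white e.2)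
    -- `W` is an `r`-weblike subgraph of `G`, with multiplicities `m`
    (W : Finset (V × V)) (hWE : W ⊆ E)
    (m : V × V → ℕ)
    (hweb : ∀ v, (¬ ∃ i, v = bnd i) →
      (∑ e ∈ W.filter (fun e => e.1 = v ∨ e.2 = v), m e) = r)
    -- `S` is a consistent labeling of `W`
    (S : V × V → Finset (Fin r))
    (hScard : ∀ e ∈ W, (S e).card = m e)
    (hSdisj : ∀ v, (¬ ∃ i, v = bnd i) →
      ∀ e ∈ W.filter (fun e => e.1 = v ∨ e.2 = v),
        ∀ e' ∈ W.filter (fun e' => e'.1 = v ∨ e'.2 = v),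
          e ≠ e' → Disjoint (S e) (S e'))
    -- the excedance `k`
    (k : ℕ)
    (hk : (Finset.univ.filter (fun v => white v ∧ ¬ ∃ i, v = bnd i)).card
        = k + (Finset.univ.filter (fun v => ¬ white v ∧ ¬ ∃ i, v = bnd i)).card) :
    ∀ i : Fin r,
      (W.filter (fun e => (∃ j, e.2 = bnd j) ∧ i ∈ S e)).card = k := by
  intro i
  have hT : ∀ e ∈ W.filter (fun e => i ∈ S e), white e.1 ∧ ¬ white e.2 :=
    fun e he => hE e (hWE (mem_filter.mp he).1)
  have hmatch : ∀ v, (¬ ∃ j, v = bnd j) →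
      ∃! e, e ∈ W.filter (fun e => i ∈ S e) ∧ (e.1 = v ∨ e.2 = v) := by
    intro v hv
    have hsum :
        ∑ e ∈ W.filter (fun e => e.1 = v ∨ e.2 = v), #(S e) = Fintype.card (Fin r) := by
      rw [Fintype.card_fin]
      exact (sum_congr rfl fun e he => hScard e (mem_filter.mp he).1).trans (hweb v hv)
    refine (existsUnique_congr fun e => ?_).mp
      (existsUnique_mem_of_pairwiseDisjoint_of_sum_card (hSdisj v hv) hsum i)
    simp only [mem_filter]
    tauto
  have hcount := card_boundary_add_card_interior_black hT hb hmatch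
  rw [filter_filter] at hcount
  simp only [and_comm (a := i ∈ S _)] at hcount
  omega

theorem consistent_labeling_boundary_multiset
    {V : Type*} [Fintype V] {n r : ℕ}
    (white : V → Prop)
    (bnd : Fin n ↪ V) (hb : ∀ i, ¬ white (bnd i))
    (E : Finset (V × V)) (hE : ∀ e ∈ E, white e.1 ∧ ¬ white e.2)
    -- each boundary vertex is incident to at most one edge
    (hbd1 : ∀ i : Fin n, (E.filter (fun e => e.2 = bnd i)).card ≤ 1)
    -- `W` is an `r`-weblike subgraph of `G`, with multiplicities `m`
    (W : Finset (V × V)) (hWE : W ⊆ E)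
    (m : V × V → ℕ)
    (hm : ∀ e ∈ W, 1 ≤ m e ∧ m e ≤ r)
    (hweb : ∀ v, (¬ ∃ i, v = bnd i) →
      (∑ e ∈ W.filter (fun e => e.1 = v ∨ e.2 = v), m e) = r)
    -- `S` is a consistent labeling of `W`
    (S : V × V → Finset (Fin r))
    (hScard : ∀ e ∈ W, (S e).card = m e)
    (hSdisj : ∀ v, (¬ ∃ i, v = bnd i) →
      ∀ e ∈ W.filter (fun e => e.1 = v ∨ e.2 = v),
        ∀ e' ∈ W.filter (fun e' => e'.1 = v ∨ e'.2 = v),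
          e ≠ e' → Disjoint (S e) (S e'))
    -- the excedance `k`
    (k : ℕ)
    (hk : (Finset.univ.filter (fun v => white v ∧ ¬ ∃ i, v = bnd i)).card
        = k + (Finset.univ.filter (fun v => ¬ white v ∧ ¬ ∃ i, v = bnd i)).card) :
    ∀ i : Fin r,
      (W.filter (fun e => (∃ j, e.2 = bnd j) ∧ i ∈ S e)).card = k :=
  consistent_labeling_boundary_multiset_general white bnd hb E hE W hWE m hweb S hScard hSdisj k hk
end

section
/- Let G be a bipartite graph with all boundary vertices black, let r ≥ 1, and let (I_1,…,I_r) be a list of k-subsets of the boundary vertex set. Then there is a bijection between: (i) r-tuples (π_1,…,π_r) of almost perfect matchings of G with ∂(π_i) = I_i for each i, and (ii) pairs (W, ℓ) where W is an r-weblike subgraph of G and ℓ is a consistent labeling of W whose boundary location subsets are (I_1,…,I_r) (i.e., for each i, the set of boundary vertices j whose boundary edge label contains color i is I_i). Under this bijection, the superposition of (π_1,…,π_r) gives W with m(e) = #{i : e ∈ π_i}. Consequently, for any edge weighting wt: E(G) → ℂ*, one has Δ_{I_1}(N)·Δ_{I_2}(N)···Δ_{I_r}(N) = Σ_W a((I_1,…,I_r);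 W)·Π_e wt(e)^{m(e)}, where the sum is over r-weblike subgraphs W of G and a((I_1,…,I_r);W) is the number of consistent labelings of W with boundary location subsets (I_1,…,I_r). -/
open scoped Classical

noncomputable section

def IsAPM {V : Type*} [Fintype V] (E : Finset (V × V)) (interior : V → Prop)
    (π : Finset (V × V)) : Prop :=
  π ⊆ E ∧
    (∀ v, interior v → (π.filter (fun e => e.1 = v ∨ e.2 = v)).card = 1) ∧
    (∀ v, ¬ interior v → (π.filter (fun e => e.1 = v ∨ e.2 = v)).card ≤ 1)

def bdrySub {V : Type*} [Fintype V] {n : ℕ} (bnd : Fin n ↪ V)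
    (π : Finset (V × V)) : Finset (Fin n) :=
  Finset.univ.filter (fun i => ∃ e ∈ π, e.2 = bnd i)

def Delta {V : Type*} [Fintype V] {n : ℕ} (E : Finset (V × V))
    (interior : V → Prop) (bnd : Fin n ↪ V) (wt : V × V → ℂ)
    (I : Finset (Fin n)) : ℂ :=
  ∑ π ∈ E.powerset.filter (fun π => IsAPM E interior π ∧ bdrySub bnd π = I),
    ∏ e ∈ π, wt e

/-- `ℓ` is a consistent labeling of an `r`-weblike subgraph of `(V,E)` with
boundary location subsets `I`.  The weblike subgraph is the support of `ℓ`,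
with multiplicities `m e = (ℓ e).card`. -/
def IsConsistentLabeling {V : Type*} [Fintype V] {n r : ℕ}
    (E : Finset (V × V)) (interior : V → Prop) (bnd : Fin n ↪ V)
    (I : Fin r → Finset (Fin n)) (ℓ : V × V → Finset (Fin r)) : Prop :=
  (∀ e, e ∉ E → ℓ e = ∅) ∧
  (∀ v, interior v →
    (∀ e ∈ E.filter (fun e => e.1 = v ∨ e.2 = v),
      ∀ e' ∈ E.filter (fun e' => e'.1 = v ∨ e'.2 = v),
        e ≠ e' → Disjoint (ℓ e) (ℓ e')) ∧
    (∑ e ∈ E.filter (fun e => e.1 = v ∨ e.2 = v), (ℓ e).card) = r) ∧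
  (∀ i : Fin r,
    I i = Finset.univ.filter (fun j => ∃ e ∈ E, e.2 = bnd j ∧ i ∈ ℓ e))

/-!
A tuple of edge sets `(π₁, …, π_r)` is the same data as the labeling `ℓ e = {i | e ∈ π_i}`:
both are a relation between colours and edges, read in the two directions. Under this
transposition, "every `π_i` covers each interior vertex exactly once" becomes "the labels
around an interior vertex are disjoint and of total size `r`", and boundary subsets become
boundary location subsets. At the boundary nothing is lost, because a black boundary vertex
meets at most one edge of `G`. Expanding `∏ᵢ Δ_{I_i}` as a sum over tuples and using
`∏ᵢ ∏_{e ∈ π_i} wt e = ∏_e wt e ^ m(e)` gives the product formula.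
-/

open Finset

section Superposition

variable {ι α : Type*} [Fintype ι] [Fintype α] [DecidableEq ι] [DecidableEq α]

def superposeEquiv : (ι → Finset α) ≃ (α → Finset ι) where
  toFun f e := univ.filter (fun i => e ∈ f i)
  invFun ℓ i := univ.filter (fun e => i ∈ ℓ e)
  left_inv f := by ext; simp
  right_inv ℓ := by ext; simp

@[simp]
lemma mem_superposeEquiv_apply {f : ι → Finset α} {e : α} {i : ι} :
    i ∈ superposeEquiv f e ↔ e ∈ f i := by
  simp [superposeEquiv]

@[simp]
lemma mem_superposeEquiv_symm_apply {ℓ : α → Finset ι} {i : ι} {e : α} :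
    e ∈ superposeEquiv.symm ℓ i ↔ i ∈ ℓ e := by
  simp [superposeEquiv]

lemma sum_card_superposeEquiv_apply (f : ι → Finset α) (s : Finset α) :
    ∑ e ∈ s, (superposeEquiv f e).card = ∑ i, (s.filter (· ∈ f i)).card :=
  sum_card_bipartiteAbove_eq_sum_card_bipartiteBelow (fun e i => e ∈ f i)

lemma prod_prod_eq_prod_pow_card_superposeEquiv_apply {M : Type*} [CommMonoid M]
    (f : ι → Finset α) {s : Finset α} (hf : ∀ i, f i ⊆ s) (w : α → M) :
    ∏ i, ∏ e ∈ f i, w e = ∏ e ∈ s, w e ^ (superposeEquiv f e).card := by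
  rw [prod_comm' (t' := s) (s' := fun e => superposeEquiv f e)]
  · simp only [prod_const]
  · intro i e
    simp only [mem_univ, true_and, mem_superposeEquiv_apply, iff_self_and]
    exact fun h => hf i h

end Superposition

lemma card_filter_mem_eq_one {ι α : Type*} [Fintype ι] {s : Finset α} {ℓ : α → Finset ι}
    (hdisj : ∀ e ∈ s, ∀ e' ∈ s, e ≠ e' → Disjoint (ℓ e) (ℓ e'))
    (hsum : ∑ e ∈ s, (ℓ e).card = Fintype.card ι) (i : ι) :
    (s.filter (fun e => i ∈ ℓ e)).card = 1 := by
  have hcover : s.biUnion ℓ = univ := eq_univ_of_card _ ((card_biUnion hdisj).trans hsum)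
  obtain ⟨e₀, he₀, hi⟩ := mem_biUnion.mp (hcover ▸ mem_univ i)
  refine le_antisymm (card_le_one.mpr ?_) (card_pos.mpr ⟨e₀, mem_filter.mpr ⟨he₀, hi⟩⟩)
  simp only [mem_filter]
  rintro e ⟨he, hie⟩ e' ⟨he', hie'⟩
  by_contra hne
  exact disjoint_left.mp (hdisj e he e' he' hne) hie hie'

lemma filter_incident_filter_mem {V : Type*} {E π : Finset (V × V)} (hπ : π ⊆ E) (v : V) :
    (E.filter (fun e => e.1 = v ∨ e.2 = v)).filter (· ∈ π)
      = π.filter (fun e => e.1 = v ∨ e.2 = v) := by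
  ext e
  simp only [mem_filter]
  exact ⟨fun ⟨⟨_, h⟩, h'⟩ => ⟨h', h⟩, fun ⟨h', h⟩ => ⟨⟨hπ h', h⟩, h'⟩⟩

section Labeling

variable {V : Type*} [Fintype V] {n r : ℕ} {E : Finset (V × V)} {interior : V → Prop}
  {bnd : Fin n ↪ V} {I : Fin r → Finset (Fin n)}

lemma bdrySub_eq_filter_of_subset {π : Finset (V × V)} (hπ : π ⊆ E) :
    bdrySub bnd π = univ.filter (fun j => ∃ e ∈ E, e.2 = bnd j ∧ e ∈ π) := by
  ext j
  simp only [bdrySub, mem_filter, mem_univ, true_and]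
  exact ⟨fun ⟨e, he, h⟩ => ⟨e, hπ he, h, he⟩, fun ⟨e, _, h, he⟩ => ⟨e, he, h⟩⟩

lemma IsAPM.eq_of_incident {π : Finset (V × V)} (hπ : IsAPM E interior π) {v : V}
    (hv : interior v) {e e' : V × V} (he : e ∈ π) (hev : e.1 = v ∨ e.2 = v) (he' : e' ∈ π)
    (hev' : e'.1 = v ∨ e'.2 = v) : e = e' :=
  card_le_one.mp (hπ.2.1 v hv).le e (mem_filter.mpr ⟨he, hev⟩) e' (mem_filter.mpr ⟨he', hev'⟩)

lemma isConsistentLabeling_superposeEquiv {f : Fin r → Finset (V × V)}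
    (hf : ∀ i, IsAPM E interior (f i) ∧ bdrySub bnd (f i) = I i) :
    IsConsistentLabeling E interior bnd I (superposeEquiv f) := by
  refine ⟨fun e he => ?_, fun v hv => ⟨?_, ?_⟩, fun i => ?_⟩
  · ext i
    simpa using fun h => he ((hf i).1.1 h)
  · intro e he e' he' hne
    refine disjoint_left.mpr fun i hi hi' => hne ?_
    rw [mem_superposeEquiv_apply] at hi hi'
    exact (hf i).1.eq_of_incident hv hi (mem_filter.mp he).2 hi' (mem_filter.mp he').2
  · rw [sum_card_superposeEquiv_apply]
    have hone : ∀ i, ((E.filter (fun e => e.1 = v ∨ e.2 = v)).filter (· ∈ f i)).card = 1 :=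
      fun i => by rw [filter_incident_filter_mem (hf i).1.1, (hf i).1.2.1 v hv]
    rw [sum_congr rfl fun i _ => hone i]
    simp
  · rw [← (hf i).2, bdrySub_eq_filter_of_subset (hf i).1.1]
    simp

namespace IsConsistentLabeling

variable {ℓ : V × V → Finset (Fin r)}

lemma superposeEquiv_symm_subset (hℓ : IsConsistentLabeling E interior bnd I ℓ) (i : Fin r) :
    superposeEquiv.symm ℓ i ⊆ E := fun e he => by
  by_contra heE
  simp [hℓ.1 e heE] at he

lemma isAPM_superposeEquiv_symm (hℓ : IsConsistentLabeling E interior bnd I ℓ)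
    (hdeg : ∀ v, ¬ interior v → (E.filter (fun e => e.1 = v ∨ e.2 = v)).card ≤ 1)
    (i : Fin r) : IsAPM E interior (superposeEquiv.symm ℓ i) := by
  have hsub := hℓ.superposeEquiv_symm_subset i
  refine ⟨hsub, fun v hv => ?_, fun v hv => ?_⟩
  · obtain ⟨hdisj, hsum⟩ := hℓ.2.1 v hv
    rw [← filter_incident_filter_mem hsub]
    convert card_filter_mem_eq_one hdisj (hsum.trans (Fintype.card_fin r).symm) i using 3
    exact mem_superposeEquiv_symm_apply
  · rw [← filter_incident_filter_mem hsub]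
    exact (card_filter_le _ _).trans (hdeg v hv)

lemma bdrySub_superposeEquiv_symm (hℓ : IsConsistentLabeling E interior bnd I ℓ) (i : Fin r) :
    bdrySub bnd (superposeEquiv.symm ℓ i) = I i := by
  rw [hℓ.2.2 i, bdrySub_eq_filter_of_subset (hℓ.superposeEquiv_symm_subset i)]
  simp

end IsConsistentLabeling

lemma isConsistentLabeling_superposeEquiv_iff
    (hdeg : ∀ v, ¬ interior v → (E.filter (fun e => e.1 = v ∨ e.2 = v)).card ≤ 1)
    {f : Fin r → Finset (V × V)} :
    IsConsistentLabeling E interior bnd I (superposeEquiv f) ↔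
      ∀ i, IsAPM E interior (f i) ∧ bdrySub bnd (f i) = I i := by
  refine ⟨fun hℓ i => ?_, isConsistentLabeling_superposeEquiv⟩
  rw [← superposeEquiv.symm_apply_apply f]
  exact ⟨hℓ.isAPM_superposeEquiv_symm hdeg i, hℓ.bdrySub_superposeEquiv_symm i⟩

lemma prod_delta_eq_sum_isConsistentLabeling
    (hdeg : ∀ v, ¬ interior v → (E.filter (fun e => e.1 = v ∨ e.2 = v)).card ≤ 1)
    (wt : V × V → ℂ) :
    ∏ i, Delta E interior bnd wt (I i) = ∑ ℓ : V × V → Finset (Fin r),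
      if IsConsistentLabeling E interior bnd I ℓ then ∏ e ∈ E, wt e ^ (ℓ e).card else 0 := by
  have hpi : Fintype.piFinset (fun i =>
        E.powerset.filter (fun π => IsAPM E interior π ∧ bdrySub bnd π = I i))
      = univ.filter (fun f : Fin r → Finset (V × V) =>
          ∀ i, IsAPM E interior (f i) ∧ bdrySub bnd (f i) = I i) := by
    ext f
    simp only [Fintype.mem_piFinset, mem_filter, mem_powerset, mem_univ, true_and]
    exact forall_congr' fun i => ⟨And.right, fun hf => ⟨hf.1.1, hf⟩⟩
  calc ∏ i, Delta E interior bnd wt (I i)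
      = ∑ f ∈ univ.filter (fun f : Fin r → Finset (V × V) =>
            ∀ i, IsAPM E interior (f i) ∧ bdrySub bnd (f i) = I i),
          ∏ i, ∏ e ∈ f i, wt e := by
        unfold Delta
        rw [prod_univ_sum, hpi]
    _ = ∑ f : Fin r → Finset (V × V),
          if IsConsistentLabeling E interior bnd I (superposeEquiv f) then
            ∏ e ∈ E, wt e ^ (superposeEquiv f e).card else 0 := by
        rw [sum_filter]
        refine sum_congr rfl fun f _ => ?_
        rw [isConsistentLabeling_superposeEquiv_iff hdeg]
        split_ifs with hf
        · exact prod_prod_eq_prod_pow_card_superposeEquiv_apply f (fun i => (hf i).1.1) wt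
        · rfl
    _ = _ := superposeEquiv.sum_comp fun ℓ =>
          if IsConsistentLabeling E interior bnd I ℓ then ∏ e ∈ E, wt e ^ (ℓ e).card else 0

end Labeling

lemma card_filter_incident_boundary_le_one {V : Type*} {n : ℕ} {white : V → Prop}
    {bnd : Fin n ↪ V} (hb : ∀ i, ¬ white (bnd i)) {E : Finset (V × V)}
    (hE : ∀ e ∈ E, white e.1 ∧ ¬ white e.2)
    (hbd1 : ∀ i : Fin n, (E.filter (fun e => e.2 = bnd i)).card ≤ 1) (v : V)
    (hv : ¬ ¬ ∃ j, v = bnd j) : (E.filter (fun e => e.1 = v ∨ e.2 = v)).card ≤ 1 := by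
  obtain ⟨j, rfl⟩ := not_not.mp hv
  refine (card_le_card fun e he => ?_).trans (hbd1 j)
  obtain ⟨heE, h | h⟩ := mem_filter.mp he
  · exact absurd (h ▸ (hE e heE).1) (hb j)
  · exact mem_filter.mpr ⟨heE, h⟩

theorem superposition_bijection_and_product_formula_general
    {V : Type*} [Fintype V] {n r : ℕ}
    (white : V → Prop)
    (bnd : Fin n ↪ V) (hb : ∀ i, ¬ white (bnd i))
    (E : Finset (V × V)) (hE : ∀ e ∈ E, white e.1 ∧ ¬ white e.2)
    (hbd1 : ∀ i : Fin n, (E.filter (fun e => e.2 = bnd i)).card ≤ 1)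
    (wt : V × V → ℂ) (I : Fin r → Finset (Fin n)) :
    -- (i) ↔ (ii): the superposition bijection
    (∃ Φ : {f : Fin r → Finset (V × V) //
              ∀ i, IsAPM E (fun v => ¬ ∃ j, v = bnd j) (f i) ∧
                bdrySub bnd (f i) = I i} ≃
           {ℓ : V × V → Finset (Fin r) //
              IsConsistentLabeling E (fun v => ¬ ∃ j, v = bnd j) bnd I ℓ},
      ∀ f e, (Φ f).1 e = Finset.univ.filter (fun i => e ∈ f.1 i)) ∧
    -- consequently, the product of boundary measurements is the weighted count
    -- of consistently labeled weblike subgraphs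
    (∏ i : Fin r, Delta E (fun v => ¬ ∃ j, v = bnd j) bnd wt (I i))
      = ∑ ℓ : V × V → Finset (Fin r),
          if IsConsistentLabeling E (fun v => ¬ ∃ j, v = bnd j) bnd I ℓ then
            ∏ e ∈ E, wt e ^ (ℓ e).card
          else 0 := by
  have hdeg := card_filter_incident_boundary_le_one hb hE hbd1
  exact ⟨⟨superposeEquiv.subtypeEquiv fun _ => (isConsistentLabeling_superposeEquiv_iff hdeg).symm,
      fun _ _ => rfl⟩, prod_delta_eq_sum_isConsistentLabeling hdeg wt⟩

theorem superposition_bijection_and_product_formula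
    {V : Type*} [Fintype V] {n r k : ℕ}
    (white : V → Prop)
    (bnd : Fin n ↪ V) (hb : ∀ i, ¬ white (bnd i))
    (E : Finset (V × V)) (hE : ∀ e ∈ E, white e.1 ∧ ¬ white e.2)
    (hbd1 : ∀ i : Fin n, (E.filter (fun e => e.2 = bnd i)).card ≤ 1)
    (wt : V × V → ℂ) (hwt : ∀ e ∈ E, wt e ≠ 0)
    (I : Fin r → Finset (Fin n)) (hI : ∀ i, (I i).card = k) :
    -- (i) ↔ (ii): the superposition bijection
    (∃ Φ : {f : Fin r → Finset (V × V) //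
              ∀ i, IsAPM E (fun v => ¬ ∃ j, v = bnd j) (f i) ∧
                bdrySub bnd (f i) = I i} ≃
           {ℓ : V × V → Finset (Fin r) //
              IsConsistentLabeling E (fun v => ¬ ∃ j, v = bnd j) bnd I ℓ},
      ∀ f e, (Φ f).1 e = Finset.univ.filter (fun i => e ∈ f.1 i)) ∧
    -- consequently, the product of boundary measurements is the weighted count
    -- of consistently labeled weblike subgraphs
    (∏ i : Fin r, Delta E (fun v => ¬ ∃ j, v = bnd j) bnd wt (I i))
      = ∑ ℓ : V × V → Finset (Fin r),
          if IsConsistentLabeling E (fun v => ¬ ∃ j, v = bnd j) bnd I ℓ then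
            ∏ e ∈ E, wt e ^ (ℓ e).card
          else 0 :=
  superposition_bijection_and_product_formula_general white bnd hb E hE hbd1 wt I

end
end

section
/- Let λ be a partition of n, M_λ the ℂ-vector space with basis the tabloids of shape λ (right ℂ[S_n]-module by permuting entries), and S_λ ⊆ M_λ the Specht module spanned by the polytabloids poly(T) = Σ_{σ ∈ col(T)} sign(σ)[T·σ]. Then S_λ ⊗ ε ≅ S_{λᵗ} as S_n-representations, where ε is the sign representation and λᵗ is the conjugate partition. -/
/-!
STATEMENT 14: `S_λ ⊗ ε ≅ S_{λᵗ}` as `S_n`-representations.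

A partition `λ ⊢ n` is encoded by its row-length function `l : ℕ → ℕ`
(antitone, supported on `[0,n)`, with total sum `n`).  A tableau of shape `l`
is a bijection `Fin n ≃ Cell l` from the numbers to the cells of the diagram.
The tabloid `[T]` of a tableau `T` is its row word `rowWord T : Fin n → ℕ`
(which cell row each number occupies); the permutation module `M_λ` is the free
module on row words, realized inside the free module `(Fin n → ℕ) →₀ ℂ` on
which `S_n` acts (on the right) by `[T]·σ = [T∘σ]`, i.e.
`single t ↦ single (t ∘ σ)`.  The Specht module `S_λ` is the span of the
polytabloids `poly T = Σ_{σ ∈ col T} sign σ · [T·σ]`.  The conjugate partition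
is `λᵗ(j) = #{i : j < l i}`.  The theorem asserts: both Specht modules are
stable under the action, and there is a linear isomorphism
`e : S_λ ≃ S_{λᵗ}` satisfying `e(x·σ) = sign σ · (e x)·σ`, i.e. an isomorphism
`S_λ ⊗ ε ≅ S_{λᵗ}` of `S_n`-representations.
-/

open Finset

noncomputable section

/-- The cells of the Young diagram with row lengths `l`. -/
def Cell (l : ℕ → ℕ) : Type := {c : ℕ × ℕ // c.2 < l c.1}

/-- Tableaux of shape `l`: bijective fillings of the diagram by `1,…,n`. -/
abbrev Tableau (n : ℕ) (l : ℕ → ℕ) : Type := Fin n ≃ Cell l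

/-- The row word (tabloid) of a tableau. -/
def rowWord {n : ℕ} {l : ℕ → ℕ} (T : Tableau n l) : Fin n → ℕ :=
  fun a => (T a).1.1

/-- The column group of a tableau: permutations preserving all columns. -/
def colSet {n : ℕ} {l : ℕ → ℕ} (T : Tableau n l) :
    Finset (Equiv.Perm (Fin n)) :=
  Finset.univ.filter (fun σ => ∀ a, (T (σ a)).1.2 = (T a).1.2)

/-- The polytabloid of a tableau. -/
def polytabloid {n : ℕ} {l : ℕ → ℕ} (T : Tableau n l) : (Fin n → ℕ) →₀ ℂ :=
  ∑ σ ∈ colSet T,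
    (Equiv.Perm.sign σ : ℤ) •
      Finsupp.single (rowWord ((σ : Fin n ≃ Fin n).trans T)) (1 : ℂ)

/-- The Specht module of shape `l`, inside the free module on row words. -/
def Specht (n : ℕ) (l : ℕ → ℕ) : Submodule ℂ ((Fin n → ℕ) →₀ ℂ) :=
  Submodule.span ℂ (Set.range (polytabloid (n := n) (l := l)))

/-- The (right) action of `σ ∈ S_n` on the free module on row words:
`[T]·σ = [T∘σ]`. -/
def act {n : ℕ} (σ : Equiv.Perm (Fin n)) :
    ((Fin n → ℕ) →₀ ℂ) →ₗ[ℂ] ((Fin n → ℕ) →₀ ℂ) :=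
  Finsupp.lmapDomain ℂ ℂ (fun t : Fin n → ℕ => t ∘ σ)

/-- The conjugate (transposed) shape. -/
def conjShape (n : ℕ) (l : ℕ → ℕ) : ℕ → ℕ :=
  fun j => ((Finset.range n).filter (fun i => j < l i)).card

/-!
Fix a tableau `T₀` of shape `λ` and a transpose `U` of it, of shape `λᵗ`. Every tabloid of
shape `λ` is `[T₀·π]`, and `[T₀·π] ↦ sign π · poly(U)·π` is well defined: two choices of `π`
differ by a row permutation of `T₀`, that is a column permutation of `U`, which acts on `poly(U)`
by its sign. The resulting map `Θ = signedTranspose T₀ U` satisfies `Θ(x·σ) = sign σ · Θ(x)·σ`,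
sends `S_λ` into `S_{λᵗ}`, and `Θ(poly T₀)` has coefficient `|col T₀|` at `[U]`. By James'
submodule theorem (column antisymmetrizers and the standard Hermitian form) `S_λ` and `S_{λᵗ}`
have no stable subspaces besides `0` and themselves, so `Θ` restricts to an isomorphism
`S_λ ⊗ ε ≅ S_{λᵗ}`.
-/

open Equiv

lemma Function.comp_swap_eq_self {α β : Type*} [DecidableEq α] {f : α → β} {a b : α}
    (h : f a = f b) : f ∘ Equiv.swap a b = f := by
  rw [Equiv.comp_swap_eq_update, h, update_eq_self, ← h, update_eq_self]

namespace SpechtModule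

variable {n : ℕ} {l : ℕ → ℕ}

lemma act_single (σ : Perm (Fin n)) (t : Fin n → ℕ) (c : ℂ) :
    act σ (Finsupp.single t c) = Finsupp.single (t ∘ σ) c :=
  Finsupp.mapDomain_single

lemma act_act (σ τ : Perm (Fin n)) (x : (Fin n → ℕ) →₀ ℂ) :
    act σ (act τ x) = act (τ * σ) x :=
  (Finsupp.mapDomain_comp (f := fun t : Fin n → ℕ => t ∘ τ) (g := fun t => t ∘ σ)).symm

lemma act_apply (σ : Perm (Fin n)) (x : (Fin n → ℕ) →₀ ℂ) (t : Fin n → ℕ) :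
    act σ x t = x (t ∘ ⇑σ⁻¹) := by
  have hinj : Function.Injective fun t : Fin n → ℕ => t ∘ σ :=
    fun t t' h => by simpa [Function.comp_assoc] using congrArg (· ∘ ⇑σ⁻¹) h
  simpa [act, Function.comp_assoc] using Finsupp.mapDomain_apply hinj x (t ∘ ⇑σ⁻¹)

def colWord (T : Tableau n l) : Fin n → ℕ := fun a => (T a).1.2

lemma rowWord_trans (π : Perm (Fin n)) (T : Tableau n l) :
    rowWord ((π : Fin n ≃ Fin n).trans T) = rowWord T ∘ π := rfl

lemma trans_symm_trans (T T' : Tableau n l) :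
    ((T'.trans T.symm : Perm (Fin n)) : Fin n ≃ Fin n).trans T = T' := by
  ext a; simp

lemma colWord_trans (π : Perm (Fin n)) (T : Tableau n l) :
    colWord ((π : Fin n ≃ Fin n).trans T) = colWord T ∘ π := rfl

lemma eq_of_rowWord_eq_of_colWord_eq {T : Tableau n l} {a b : Fin n}
    (hrow : rowWord T a = rowWord T b) (hcol : colWord T a = colWord T b) : a = b :=
  T.injective (Subtype.ext (Prod.ext hrow hcol))

def colGroup (T : Tableau n l) : Subgroup (Perm (Fin n)) where
  carrier := {σ | colWord T ∘ σ = colWord T}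
  mul_mem' {σ τ} hσ hτ := by
    change colWord T ∘ σ ∘ τ = colWord T
    rw [← Function.comp_assoc, hσ, hτ]
  one_mem' := rfl
  inv_mem' {σ} hσ := by
    change colWord T ∘ ⇑σ⁻¹ = colWord T
    conv_lhs => rw [← hσ]
    ext a; simp

lemma mem_colGroup {T : Tableau n l} {σ : Perm (Fin n)} :
    σ ∈ colGroup T ↔ colWord T ∘ σ = colWord T := Iff.rfl

lemma mem_colSet {T : Tableau n l} {σ : Perm (Fin n)} :
    σ ∈ colSet T ↔ σ ∈ colGroup T := by
  simp [colSet, mem_colGroup, funext_iff, colWord]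

lemma inv_mem_colSet {T : Tableau n l} {σ : Perm (Fin n)} (hσ : σ ∈ colSet T) :
    σ⁻¹ ∈ colSet T :=
  mem_colSet.2 (inv_mem (mem_colSet.1 hσ))

lemma sum_colSet_mul_left {M : Type*} [AddCommMonoid M] {T : Tableau n l} {τ : Perm (Fin n)}
    (hτ : τ ∈ colSet T) (f : Perm (Fin n) → M) :
    ∑ σ ∈ colSet T, f (τ * σ) = ∑ σ ∈ colSet T, f σ :=
  Finset.sum_equiv (Equiv.mulLeft τ)
    (fun σ => by simp [mem_colSet, (colGroup T).mul_mem_cancel_left (mem_colSet.1 hτ)])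
    (fun _ _ => rfl)

lemma sum_colSet_mul_right {M : Type*} [AddCommMonoid M] {T : Tableau n l} {τ : Perm (Fin n)}
    (hτ : τ ∈ colSet T) (f : Perm (Fin n) → M) :
    ∑ σ ∈ colSet T, f (σ * τ) = ∑ σ ∈ colSet T, f σ :=
  Finset.sum_equiv (Equiv.mulRight τ)
    (fun σ => by simp [mem_colSet, (colGroup T).mul_mem_cancel_right (mem_colSet.1 hτ)])
    (fun _ _ => rfl)

lemma sum_colSet_inv {M : Type*} [AddCommMonoid M] (T : Tableau n l) (f : Perm (Fin n) → M) :
    ∑ σ ∈ colSet T, f σ⁻¹ = ∑ σ ∈ colSet T, f σ :=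
  Finset.sum_equiv (Equiv.inv _) (fun σ => by simp [mem_colSet]) (fun _ _ => rfl)

lemma conj_mem_colSet_trans_iff (π : Perm (Fin n)) (T : Tableau n l) (σ : Perm (Fin n)) :
    π⁻¹ * σ * π ∈ colSet ((π : Fin n ≃ Fin n).trans T) ↔ σ ∈ colSet T := by
  simp only [mem_colSet, mem_colGroup, colWord_trans]
  constructor
  · intro h
    ext a
    simpa using congrFun h (π⁻¹ a)
  · intro h
    ext a
    simpa using congrFun h (π a)

lemma sign_smul_sign_smul (σ : Perm (Fin n)) (x : (Fin n → ℕ) →₀ ℂ) :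
    (Perm.sign σ : ℤ) • (Perm.sign σ : ℤ) • x = x := by
  rw [smul_smul, Int.units_coe_mul_self, one_smul]

def colAntisymmetrizer (T : Tableau n l) :
    ((Fin n → ℕ) →₀ ℂ) →ₗ[ℂ] ((Fin n → ℕ) →₀ ℂ) :=
  ∑ σ ∈ colSet T, (Perm.sign σ : ℤ) • act σ

lemma colAntisymmetrizer_apply (T : Tableau n l) (x : (Fin n → ℕ) →₀ ℂ) :
    colAntisymmetrizer T x = ∑ σ ∈ colSet T, (Perm.sign σ : ℤ) • act σ x := by
  simp [colAntisymmetrizer]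

lemma colAntisymmetrizer_single_rowWord (T : Tableau n l) :
    colAntisymmetrizer T (Finsupp.single (rowWord T) 1) = polytabloid T := by
  simp [colAntisymmetrizer_apply, polytabloid, act_single, rowWord_trans]

lemma colAntisymmetrizer_act {T : Tableau n l} {τ : Perm (Fin n)} (hτ : τ ∈ colSet T)
    (x : (Fin n → ℕ) →₀ ℂ) :
    colAntisymmetrizer T (act τ x) = (Perm.sign τ : ℤ) • colAntisymmetrizer T x := by
  simp only [colAntisymmetrizer_apply, act_act, Finset.smul_sum]
  rw [← sum_colSet_mul_left (inv_mem_colSet hτ)]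
  refine Finset.sum_congr rfl fun σ _ => ?_
  simp [mul_smul]

lemma act_colAntisymmetrizer {T : Tableau n l} {τ : Perm (Fin n)} (hτ : τ ∈ colSet T)
    (x : (Fin n → ℕ) →₀ ℂ) :
    act τ (colAntisymmetrizer T x) = (Perm.sign τ : ℤ) • colAntisymmetrizer T x := by
  simp only [colAntisymmetrizer_apply, map_sum, map_zsmul, act_act, Finset.smul_sum]
  rw [← sum_colSet_mul_right (inv_mem_colSet hτ)]
  refine Finset.sum_congr rfl fun σ _ => ?_
  simpa [mul_smul] using smul_comm _ _ _

lemma act_polytabloid_of_mem {T : Tableau n l} {τ : Perm (Fin n)} (hτ : τ ∈ colSet T) :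
    act τ (polytabloid T) = (Perm.sign τ : ℤ) • polytabloid T := by
  rw [← colAntisymmetrizer_single_rowWord, act_colAntisymmetrizer hτ]

lemma act_polytabloid (π : Perm (Fin n)) (T : Tableau n l) :
    act π (polytabloid T) = polytabloid ((π : Fin n ≃ Fin n).trans T) := by
  simp only [polytabloid, map_sum, map_zsmul, act_single]
  refine Finset.sum_equiv (MulAut.conj π⁻¹).toEquiv
    (fun σ => (conj_mem_colSet_trans_iff π T σ).symm) fun σ _ => ?_
  have hsign : Perm.sign ((MulAut.conj π⁻¹).toEquiv σ) = Perm.sign σ := by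
    simp [mul_right_comm]
  rw [hsign]
  congr 2
  ext a
  simp [rowWord]

lemma polytabloid_apply_rowWord (T : Tableau n l) : polytabloid T (rowWord T) = 1 := by
  rw [polytabloid, Finsupp.finsetSum_apply,
    sum_eq_single 1 (fun σ hσ h1 => ?_) (by simp [mem_colSet, one_mem])]
  · rw [rowWord_trans]
    simp
  · have hrow : rowWord T ∘ σ ≠ rowWord T := fun h => h1 <| Equiv.ext fun a =>
      eq_of_rowWord_eq_of_colWord_eq (congrFun h a) (congrFun (mem_colGroup.1 (mem_colSet.1 hσ)) a)
    simp [rowWord_trans, hrow]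

lemma act_mem_specht (σ : Perm (Fin n)) {x : (Fin n → ℕ) →₀ ℂ} (hx : x ∈ Specht n l) :
    act σ x ∈ Specht n l := by
  refine (Submodule.span_le (p := (Specht n l).comap (act σ)) |>.2 ?_) hx
  rintro _ ⟨T, rfl⟩
  change act σ (polytabloid T) ∈ Specht n l
  rw [act_polytabloid]
  exact Submodule.subset_span ⟨_, rfl⟩


def tabloidSpan (n : ℕ) (l : ℕ → ℕ) : Submodule ℂ ((Fin n → ℕ) →₀ ℂ) :=
  Submodule.span ℂ (Set.range fun U : Tableau n l => Finsupp.single (rowWord U) (1 : ℂ))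

lemma specht_le_tabloidSpan : Specht n l ≤ tabloidSpan n l := by
  refine Submodule.span_le.2 ?_
  rintro _ ⟨T, rfl⟩
  refine Submodule.sum_mem _ fun σ _ => zsmul_mem ?_ _
  exact Submodule.subset_span ⟨_, rfl⟩

def colBand (T : Tableau n l) (m : ℕ) : Finset (Fin n) := {a | colWord T a < m}

section Counting

variable {T U : Tableau n l}

lemma card_colBand_filter_rowWord_le
    (hinj : Function.Injective fun a => (colWord T a, rowWord U a)) (m v : ℕ) :
    #{a ∈ colBand T m | rowWord U a = v} ≤ min (l v) m := by
  refine le_min ?_ ?_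
  · refine (card_le_card_of_injOn (colWord U) (t := range (l v)) ?_ ?_).trans_eq (card_range _)
    · intro a ha
      rw [mem_coe, mem_filter] at ha
      rw [mem_coe, mem_range, ← ha.2]
      exact (U a).2
    · intro a ha b hb h
      simp only [mem_coe, mem_filter] at ha hb
      exact eq_of_rowWord_eq_of_colWord_eq (ha.2.trans hb.2.symm) h
  · refine (card_le_card_of_injOn (colWord T) (t := range m) ?_ ?_).trans_eq (card_range _)
    · intro a ha
      simp only [colBand, mem_coe, mem_filter, mem_univ, true_and] at ha
      simpa using ha.1
    · intro a ha b hb h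
      simp only [mem_coe, mem_filter] at ha hb
      exact hinj (Prod.ext h (ha.2.trans hb.2.symm))

lemma min_le_card_colBand_filter_rowWord (T : Tableau n l) (m v : ℕ) :
    min (l v) m ≤ #{a ∈ colBand T m | rowWord T a = v} := by
  refine (card_range _).symm.trans_le (card_le_card_of_surjOn (colWord T) fun j hj => ?_)
  simp only [coe_range, Set.mem_Iio, lt_min_iff] at hj
  have hT : T (T.symm ⟨(v, j), hj.1⟩) = ⟨(v, j), hj.1⟩ := T.apply_symm_apply _
  refine ⟨T.symm ⟨(v, j), hj.1⟩, ?_, by simp only [colWord, hT]⟩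
  rw [mem_coe, mem_filter, colBand, mem_filter]
  exact ⟨⟨mem_univ _, by simpa only [colWord, hT] using hj.2⟩, by simp only [rowWord, hT]⟩

-- Summed over all rows, both sides count the entries in the first `m` columns of `T`.
lemma card_colBand_filter_rowWord_eq
    (hinj : Function.Injective fun a => (colWord T a, rowWord U a)) (m : ℕ) (a : Fin n) :
    #{b ∈ colBand T m | rowWord U b = rowWord U a} = min (l (rowWord U a)) m := by
  set S := univ.image (rowWord U) ∪ univ.image (rowWord T)
  have hU := card_eq_sum_card_fiberwise (s := colBand T m) (t := S) (f := rowWord U)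
    fun b _ => by simp [S]
  have hT := card_eq_sum_card_fiberwise (s := colBand T m) (t := S) (f := rowWord T)
    fun b _ => by simp [S]
  have hle : ∀ v ∈ S, #{b ∈ colBand T m | rowWord U b = v} ≤ min (l v) m :=
    fun v _ => card_colBand_filter_rowWord_le hinj m v
  have hsum : ∑ v ∈ S, #{b ∈ colBand T m | rowWord U b = v} = ∑ v ∈ S, min (l v) m :=
    (sum_le_sum hle).antisymm <| hU ▸ hT ▸
      sum_le_sum fun v _ => min_le_card_colBand_filter_rowWord T m v
  exact (sum_eq_sum_iff_of_le hle).1 hsum _ (by simp [S])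

lemma colWord_lt_of_injective
    (hinj : Function.Injective fun a => (colWord T a, rowWord U a)) (a : Fin n) :
    colWord T a < l (rowWord U a) := by
  -- otherwise the columns left of `a` in `T` already hold all of row `rowWord U a` of `U`
  by_contra! h
  have hsub : {b ∈ colBand T (colWord T a) | rowWord U b = rowWord U a}
      ⊂ {b ∈ colBand T (colWord T a + 1) | rowWord U b = rowWord U a} := by
    refine ssubset_iff_of_subset (fun b hb => ?_) |>.2 ⟨a, by simp [colBand], by simp [colBand]⟩
    simp only [colBand, mem_filter, mem_univ, true_and] at hb ⊢
    exact ⟨hb.1.trans (Nat.lt_succ_self _), hb.2⟩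
  have := (card_lt_card hsub).trans_le (card_colBand_filter_rowWord_le hinj _ _)
  rw [card_colBand_filter_rowWord_eq hinj, min_eq_left h] at this
  exact lt_irrefl _ (this.trans_le (min_le_left _ _))

lemma exists_mem_colSet_rowWord_comp_eq
    (hinj : Function.Injective fun a => (colWord T a, rowWord U a)) :
    ∃ σ ∈ colSet T, rowWord T ∘ σ = rowWord U := by
  let f : Fin n → Cell l := fun a =>
    ⟨(rowWord U a, colWord T a), colWord_lt_of_injective hinj a⟩
  have hf : Function.Injective (T.symm ∘ f) := fun a b h =>
    hinj (by simpa [f, Prod.swap] using congrArg (fun c : Cell l => c.1.swap) (T.symm.injective h))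
  let σ := Equiv.ofBijective _ (Finite.injective_iff_bijective.1 hf)
  have hσ : ∀ a, T (σ a) = f a := fun a => T.apply_symm_apply _
  refine ⟨σ, mem_colSet.2 (funext fun a => ?_), funext fun a => ?_⟩
  · simp [colWord, hσ, f]
  · simp [rowWord, hσ, f]

end Counting

lemma colAntisymmetrizer_single_eq_zero {T : Tableau n l} {s : Fin n → ℕ} {a b : Fin n}
    (hab : a ≠ b) (hcol : colWord T a = colWord T b) (hs : s a = s b) :
    colAntisymmetrizer T (Finsupp.single s 1) = 0 := by
  have hswap : Equiv.swap a b ∈ colSet T := mem_colSet.2 (Function.comp_swap_eq_self hcol)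
  have h := colAntisymmetrizer_act hswap (Finsupp.single s 1)
  rw [act_single, Function.comp_swap_eq_self hs, Perm.sign_swap hab] at h
  simpa using self_eq_neg.1 (h.trans (by simp))

lemma colAntisymmetrizer_mem_span_polytabloid (T : Tableau n l) {x : (Fin n → ℕ) →₀ ℂ}
    (hx : x ∈ tabloidSpan n l) : colAntisymmetrizer T x ∈ ℂ ∙ polytabloid T := by
  refine (Submodule.span_le (p := (ℂ ∙ polytabloid T).comap (colAntisymmetrizer T)) |>.2 ?_) hx
  rintro _ ⟨U, rfl⟩
  change colAntisymmetrizer T (Finsupp.single (rowWord U) 1) ∈ ℂ ∙ polytabloid T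
  by_cases hinj : Function.Injective fun a => (colWord T a, rowWord U a)
  · obtain ⟨σ, hσ, h⟩ := exists_mem_colSet_rowWord_comp_eq hinj
    rw [← h, ← act_single, colAntisymmetrizer_act hσ, colAntisymmetrizer_single_rowWord]
    exact zsmul_mem (Submodule.mem_span_singleton_self _) _
  · obtain ⟨a, b, hab, hne⟩ := Function.not_injective_iff.1 hinj
    rw [colAntisymmetrizer_single_eq_zero hne (congrArg Prod.fst hab) (congrArg Prod.snd hab)]
    exact zero_mem _


def hermitianForm (x : (Fin n → ℕ) →₀ ℂ) : ((Fin n → ℕ) →₀ ℂ) →ₗ[ℂ] ℂ :=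
  Finsupp.linearCombination ℂ fun t => star (x t)

lemma hermitianForm_single (x : (Fin n → ℕ) →₀ ℂ) (t : Fin n → ℕ) (c : ℂ) :
    hermitianForm x (Finsupp.single t c) = c * star (x t) := by
  simp [hermitianForm]

lemma eq_zero_of_hermitianForm_self {x : (Fin n → ℕ) →₀ ℂ} (h : hermitianForm x x = 0) :
    x = 0 := by
  have hnorm : hermitianForm x x = ((∑ t ∈ x.support, Complex.normSq (x t) : ℝ) : ℂ) := by
    simp [hermitianForm, Finsupp.linearCombination_apply, Finsupp.sum, Complex.mul_conj]
  rw [hnorm, Complex.ofReal_eq_zero,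
    sum_eq_zero_iff_of_nonneg fun _ _ => Complex.normSq_nonneg _] at h
  ext t
  by_contra ht
  exact ht (Complex.normSq_eq_zero.1 (h t (Finsupp.mem_support_iff.2 ht)))

lemma hermitianForm_polytabloid (x : (Fin n → ℕ) →₀ ℂ) (T : Tableau n l) :
    hermitianForm x (polytabloid T) = star (colAntisymmetrizer T x (rowWord T)) := by
  rw [colAntisymmetrizer_apply, ← sum_colSet_inv]
  simp [polytabloid, hermitianForm_single, act_apply, rowWord_trans]

variable {p : Submodule ℂ ((Fin n → ℕ) →₀ ℂ)}

lemma colAntisymmetrizer_mem (hstab : ∀ σ, ∀ x ∈ p, act σ x ∈ p) (T : Tableau n l)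
    {x : (Fin n → ℕ) →₀ ℂ} (hx : x ∈ p) : colAntisymmetrizer T x ∈ p := by
  rw [colAntisymmetrizer_apply]
  exact Submodule.sum_mem _ fun σ _ => zsmul_mem (hstab σ x hx) _

lemma specht_le_of_polytabloid_mem (hstab : ∀ σ, ∀ x ∈ p, act σ x ∈ p) {T : Tableau n l}
    (hT : polytabloid T ∈ p) : Specht n l ≤ p := by
  refine Submodule.span_le.2 ?_
  rintro _ ⟨T', rfl⟩
  rw [SetLike.mem_coe, ← trans_symm_trans T T', ← act_polytabloid]
  exact hstab _ _ hT

theorem eq_bot_or_eq_specht (hp : p ≤ Specht n l) (hstab : ∀ σ, ∀ x ∈ p, act σ x ∈ p) :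
    p = ⊥ ∨ p = Specht n l := by
  by_cases h : ∃ x ∈ p, ∃ T : Tableau n l, colAntisymmetrizer T x ≠ 0
  · obtain ⟨x, hx, T, hT⟩ := h
    obtain ⟨c, hc⟩ := Submodule.mem_span_singleton.1 <|
      colAntisymmetrizer_mem_span_polytabloid T (specht_le_tabloidSpan (hp hx))
    have hc0 : c ≠ 0 := by rintro rfl; exact hT (by simp [← hc])
    have hpoly : polytabloid T ∈ p := by
      simpa [← hc, smul_smul, inv_mul_cancel₀ hc0] using
        p.smul_mem c⁻¹ (colAntisymmetrizer_mem hstab T hx)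
    exact .inr (hp.antisymm (specht_le_of_polytabloid_mem hstab hpoly))
  · -- `x` is orthogonal to every polytabloid, hence to itself
    push Not at h
    refine .inl ((Submodule.eq_bot_iff p).2 fun x hx => eq_zero_of_hermitianForm_self ?_)
    have hperp : Specht n l ≤ LinearMap.ker (hermitianForm x) := by
      refine Submodule.span_le.2 ?_
      rintro _ ⟨T, rfl⟩
      simp [hermitianForm_polytabloid, h x hx T]
    exact hperp (hp hx)

section SignedTranspose

variable {l' : ℕ → ℕ} (T₀ : Tableau n l) (U : Tableau n l')

def signedTranspose : ((Fin n → ℕ) →₀ ℂ) →ₗ[ℂ] ((Fin n → ℕ) →₀ ℂ) :=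
  Finsupp.linearCombination ℂ fun s =>
    if h : ∃ π : Perm (Fin n), rowWord T₀ ∘ π = s then
      (Perm.sign h.choose : ℤ) • act h.choose (polytabloid U)
    else 0

variable {T₀ U}

lemma sign_smul_act_polytabloid_congr (hU : colWord U = rowWord T₀) {π π' : Perm (Fin n)}
    (h : rowWord T₀ ∘ π' = rowWord T₀ ∘ π) :
    (Perm.sign π' : ℤ) • act π' (polytabloid U) =
      (Perm.sign π : ℤ) • act π (polytabloid U) := by
  set ρ := π' * π⁻¹
  have hρ : ρ ∈ colSet U := by
    refine mem_colSet.2 (mem_colGroup.2 ?_)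
    rw [hU, Perm.coe_mul, ← Function.comp_assoc, h, Function.comp_assoc]
    simp
  have hπ' : π' = ρ * π := by simp [ρ]
  rw [hπ', ← act_act, act_polytabloid_of_mem hρ, map_zsmul, Perm.sign_mul, Units.val_mul,
    mul_smul, smul_comm _ (Perm.sign π : ℤ), sign_smul_sign_smul]

lemma signedTranspose_single_rowWord_comp (hU : colWord U = rowWord T₀) (π : Perm (Fin n)) :
    signedTranspose T₀ U (Finsupp.single (rowWord T₀ ∘ π) 1) =
      (Perm.sign π : ℤ) • act π (polytabloid U) := by
  have h : ∃ π' : Perm (Fin n), rowWord T₀ ∘ ⇑π' = rowWord T₀ ∘ ⇑π := ⟨π, rfl⟩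
  rw [signedTranspose, Finsupp.linearCombination_single, one_smul, dif_pos h]
  exact sign_smul_act_polytabloid_congr hU h.choose_spec

lemma signedTranspose_single_of_not_exists {s : Fin n → ℕ}
    (hs : ¬∃ π : Perm (Fin n), rowWord T₀ ∘ π = s) :
    signedTranspose T₀ U (Finsupp.single s 1) = 0 := by
  rw [signedTranspose, Finsupp.linearCombination_single, one_smul, dif_neg hs]

lemma signedTranspose_act (hU : colWord U = rowWord T₀) (g : Perm (Fin n))
    (x : (Fin n → ℕ) →₀ ℂ) :
    signedTranspose T₀ U (act g x) = (Perm.sign g : ℤ) • act g (signedTranspose T₀ U x) := by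
  suffices h : signedTranspose T₀ U ∘ₗ act g =
      (Perm.sign g : ℤ) • (act g ∘ₗ signedTranspose T₀ U) from LinearMap.congr_fun h x
  refine Finsupp.lhom_ext fun s c => ?_
  rw [← Finsupp.smul_single_one]
  simp only [LinearMap.comp_apply, LinearMap.smul_apply, map_smul, act_single]
  congr 1
  by_cases hs : ∃ π : Perm (Fin n), rowWord T₀ ∘ π = s
  · obtain ⟨π, rfl⟩ := hs
    rw [Function.comp_assoc, ← Perm.coe_mul, signedTranspose_single_rowWord_comp hU,
      signedTranspose_single_rowWord_comp hU, ← act_act, map_zsmul, Perm.sign_mul,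
      Units.val_mul, mul_smul, smul_comm]
  · have hsg : ¬∃ π : Perm (Fin n), rowWord T₀ ∘ π = s ∘ g := fun ⟨π, hπ⟩ =>
      hs ⟨π * g⁻¹, by rw [Perm.coe_mul, ← Function.comp_assoc, hπ, Function.comp_assoc]; simp⟩
    rw [signedTranspose_single_of_not_exists hs, signedTranspose_single_of_not_exists hsg,
      map_zero, smul_zero]

lemma signedTranspose_mem_specht (hU : colWord U = rowWord T₀) {x : (Fin n → ℕ) →₀ ℂ}
    (hx : x ∈ tabloidSpan n l) : signedTranspose T₀ U x ∈ Specht n l' := by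
  refine (Submodule.span_le (p := (Specht n l').comap (signedTranspose T₀ U)) |>.2 ?_) hx
  rintro _ ⟨V, rfl⟩
  change signedTranspose T₀ U (Finsupp.single (rowWord V) 1) ∈ Specht n l'
  rw [← trans_symm_trans T₀ V, rowWord_trans, signedTranspose_single_rowWord_comp hU]
  exact zsmul_mem (act_mem_specht _ (Submodule.subset_span ⟨U, rfl⟩)) _

lemma signedTranspose_polytabloid_ne_zero (hU : colWord U = rowWord T₀)
    (hU' : rowWord U = colWord T₀) : signedTranspose T₀ U (polytabloid T₀) ≠ 0 := by
  have hsum : signedTranspose T₀ U (polytabloid T₀) =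
      ∑ σ ∈ colSet T₀, act σ (polytabloid U) := by
    simp only [polytabloid, map_sum, map_zsmul, rowWord_trans,
      signedTranspose_single_rowWord_comp hU, sign_smul_sign_smul]
  have hcoeff : ∀ σ ∈ colSet T₀, act σ (polytabloid U) (rowWord U) = 1 := fun σ hσ => by
    rw [act_apply, hU', mem_colGroup.1 (mem_colSet.1 (inv_mem_colSet hσ)), ← hU',
      polytabloid_apply_rowWord]
  intro h
  have := congrArg (· (rowWord U)) (hsum.symm.trans h)
  simp only [Finsupp.finsetSum_apply, sum_congr rfl hcoeff, sum_const, nsmul_eq_mul, mul_one,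
    Finsupp.coe_zero, Pi.zero_apply, Nat.cast_eq_zero, card_eq_zero] at this
  exact notMem_empty _ (this ▸ (mem_colSet.2 (one_mem _) : 1 ∈ colSet T₀))

end SignedTranspose

variable {l' : ℕ → ℕ} {f : ((Fin n → ℕ) →₀ ℂ) →ₗ[ℂ] ((Fin n → ℕ) →₀ ℂ)}

theorem exists_linearEquiv_specht
    (hf : ∀ σ x, f (act σ x) = (Perm.sign σ : ℤ) • act σ (f x))
    (hmaps : ∀ x ∈ Specht n l, f x ∈ Specht n l') {x₀ : (Fin n → ℕ) →₀ ℂ}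
    (hx₀ : x₀ ∈ Specht n l) (hfx₀ : f x₀ ≠ 0) :
    ∃ e : Specht n l ≃ₗ[ℂ] Specht n l', ∀ x, (e x : (Fin n → ℕ) →₀ ℂ) = f x := by
  have hker : Disjoint (Specht n l) (LinearMap.ker f) := by
    refine disjoint_iff.2 ((eq_bot_or_eq_specht inf_le_left fun σ x hx => ?_).resolve_right
      fun h => hfx₀ (show x₀ ∈ Specht n l ⊓ LinearMap.ker f by rw [h]; exact hx₀).2)
    refine ⟨act_mem_specht σ hx.1, ?_⟩
    simp [LinearMap.mem_ker.1 hx.2, hf]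
  have hrange : (Specht n l).map f = Specht n l' := by
    refine (eq_bot_or_eq_specht (Submodule.map_le_iff_le_comap.2 hmaps) ?_).resolve_left
      fun h => hfx₀ (by simpa [h] using Submodule.mem_map_of_mem (f := f) hx₀)
    rintro σ _ ⟨x, hx, rfl⟩
    have h : act σ (f x) = (Perm.sign σ : ℤ) • f (act σ x) := by rw [hf, sign_smul_sign_smul]
    exact h ▸ zsmul_mem (Submodule.mem_map_of_mem (act_mem_specht σ hx)) _
  exact ⟨(LinearEquiv.ofInjective _ (LinearMap.injective_domRestrict_iff.2 hker)).trans
    (LinearEquiv.ofEq _ _ ((LinearMap.range_domRestrict _ _).trans hrange)), fun _ => rfl⟩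

lemma lt_of_lt_apply (hsupp : ∀ i, n ≤ i → l i = 0) {i j : ℕ} (h : j < l i) : i < n := by
  by_contra! hi
  simp [hsupp i hi] at h

lemma nonempty_tableau (hsupp : ∀ i, n ≤ i → l i = 0) (hsum : ∑ i ∈ range n, l i = n) :
    Nonempty (Tableau n l) := by
  let e : Cell l ≃ Σ i : Fin n, Fin (l i) :=
    { toFun := fun c => ⟨⟨c.1.1, lt_of_lt_apply hsupp c.2⟩, ⟨c.1.2, c.2⟩⟩
      invFun := fun p => ⟨(p.1, p.2), p.2.2⟩
      left_inv := fun _ => rfl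
      right_inv := fun _ => rfl }
  exact ⟨(Fintype.equivOfCardEq (by simp [Fin.sum_univ_eq_sum_range l, hsum])).trans e.symm⟩

lemma lt_conjShape_of_lt (hmono : Antitone l) (hsupp : ∀ i, n ≤ i → l i = 0) {i j : ℕ}
    (h : j < l i) : i < conjShape n l j := by
  have hsub : range (i + 1) ⊆ {i' ∈ range n | j < l i'} := fun i' hi' => by
    have hi'i : i' ≤ i := Nat.lt_succ_iff.1 (mem_range.1 hi')
    exact mem_filter.2 ⟨mem_range.2 (hi'i.trans_lt (lt_of_lt_apply hsupp h)),
      h.trans_le (hmono hi'i)⟩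
  simpa [conjShape] using card_le_card hsub

lemma lt_of_lt_conjShape (hmono : Antitone l) {i j : ℕ} (h : i < conjShape n l j) : j < l i := by
  by_contra! hij
  have hsub : {i' ∈ range n | j < l i'} ⊆ range i := fun i' hi' => by
    refine mem_range.2 (lt_of_not_ge fun hii' => ?_)
    exact (mem_filter.1 hi').2.not_ge ((hmono hii').trans hij)
  exact absurd ((card_le_card hsub).trans_lt' h) (by simp)

def transposeCell (hmono : Antitone l) (hsupp : ∀ i, n ≤ i → l i = 0) :
    Cell l ≃ Cell (conjShape n l) where
  toFun c := ⟨c.1.swap, lt_conjShape_of_lt hmono hsupp c.2⟩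
  invFun c := ⟨c.1.swap, lt_of_lt_conjShape hmono c.2⟩
  left_inv _ := rfl
  right_inv _ := rfl

end SpechtModule

open SpechtModule in
theorem specht_tensor_sign_iso_conj
    (n : ℕ) (l : ℕ → ℕ)
    (hmono : Antitone l) (hsupp : ∀ i, n ≤ i → l i = 0)
    (hsum : ∑ i ∈ Finset.range n, l i = n) :
    (∀ (σ : Equiv.Perm (Fin n)) (x : (Fin n → ℕ) →₀ ℂ),
      x ∈ Specht n l → act σ x ∈ Specht n l) ∧
    (∀ (σ : Equiv.Perm (Fin n)) (x : (Fin n → ℕ) →₀ ℂ),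
      x ∈ Specht n (conjShape n l) → act σ x ∈ Specht n (conjShape n l)) ∧
    ∃ e : (Specht n l) ≃ₗ[ℂ] (Specht n (conjShape n l)),
      ∀ (σ : Equiv.Perm (Fin n)) (x y : Specht n l),
        act σ (x : (Fin n → ℕ) →₀ ℂ) = (y : (Fin n → ℕ) →₀ ℂ) →
        ((e y : Specht n (conjShape n l)) : (Fin n → ℕ) →₀ ℂ)
          = (Equiv.Perm.sign σ : ℤ) •
              act σ ((e x : Specht n (conjShape n l)) : (Fin n → ℕ) →₀ ℂ) := by
  obtain ⟨T₀⟩ := nonempty_tableau hsupp hsum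
  let U : Tableau n (conjShape n l) := T₀.trans (transposeCell hmono hsupp)
  have hU : colWord U = rowWord T₀ := rfl
  obtain ⟨e, he⟩ := exists_linearEquiv_specht (signedTranspose_act hU)
    (fun x hx => signedTranspose_mem_specht hU (specht_le_tabloidSpan hx))
    (Submodule.subset_span ⟨T₀, rfl⟩) (signedTranspose_polytabloid_ne_zero hU rfl)
  refine ⟨fun σ _ => act_mem_specht σ, fun σ _ => act_mem_specht σ, e, ?_⟩
  rintro σ x y hxy
  rw [he, he, ← hxy, signedTranspose_act hU]

end
end
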